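/- Let a, b ∈ (0,1) with a ≥ 1-b and a(1-a) ≤ b(1-b), and let γ = 2^{(H(b)-H(a))/(a+b-1)} where H is the binary entropy function. Then γ² ≤ a² / ( b·(1-a) ). -/

import Mathlib

/-!
Write `s = a + b - 1 > 0` and work with natural logarithms. After multiplying out, the claim
`2 (H(b) - H(a)) ≤ s · log₂ (a² / (b(1-a)))` becomes
`2 (1-b) log (a/(1-b)) ≤ (1-a+b) log (b/(1-a))`. The left side is at most `2s` by
`log t ≤ t - 1`; since `b/(1-a) ≥ 1`, the right side is at least `2s` by
`log t ≥ 2(t-1)/(t+1)` for `t ≥ 1`.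
-/

/-- The binary entropy function `H(x) = -x·log₂ x - (1-x)·log₂(1-x)`. -/
noncomputable def binEnt (x : ℝ) : ℝ := -x * Real.logb 2 x - (1 - x) * Real.logb 2 (1 - x)

open Real

theorem Real.two_mul_sub_one_div_add_one_le_log {x : ℝ} (hx : 1 ≤ x) :
    2 * (x - 1) / (x + 1) ≤ log x := by
  obtain rfl | hx := hx.eq_or_lt
  · simp
  have hx0 : 0 < x - 1 := sub_pos.mpr hx
  -- the first term of `log (1 + y⁻¹) = ∑ 2 / ((2k+1) (2y+1)^(2k+1))` at `y = (x-1)⁻¹`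
  have hsum := hasSum_log_one_add_inv (inv_pos.mpr hx0)
  rw [inv_inv, add_sub_cancel] at hsum
  refine le_of_eq_of_le ?_ (le_hasSum hsum 0 fun k _ => by positivity)
  have hx1 : 2 * (x - 1)⁻¹ + 1 = (x + 1) / (x - 1) := by field_simp; ring
  rw [hx1, one_div_div]
  push_cast
  ring

theorem binEnt_eq_binEntropy_div_log_two (x : ℝ) : binEnt x = binEntropy x / log 2 := by
  simp only [binEnt, binEntropy, logb, log_inv]
  ring

theorem two_mul_binEntropy_sub_le {a b : ℝ} (ha0 : 0 < a) (ha1 : a < 1) (hb0 : 0 < b)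
    (hb1 : b < 1) (hab : 1 - b ≤ a) :
    2 * (binEntropy b - binEntropy a) ≤ (a + b - 1) * log (a ^ 2 / (b * (1 - a))) := by
  have h1a : 0 < 1 - a := by linarith
  have h1b : 0 < 1 - b := by linarith
  have hA : (1 - b) * (log a - log (1 - b)) ≤ a + b - 1 := by
    have := log_le_sub_one_of_pos (div_pos ha0 h1b)
    rw [log_div ha0.ne' h1b.ne'] at this
    calc (1 - b) * (log a - log (1 - b)) ≤ (1 - b) * (a / (1 - b) - 1) := by gcongr
      _ = a + b - 1 := by field_simp; ring
  have hB : 2 * (a + b - 1) ≤ (1 - a + b) * (log b - log (1 - a)) := by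
    have := two_mul_sub_one_div_add_one_le_log ((one_le_div h1a).mpr (by linarith) :
      1 ≤ b / (1 - a))
    rw [log_div hb0.ne' h1a.ne'] at this
    calc 2 * (a + b - 1) = (1 - a + b) * (2 * (b / (1 - a) - 1) / (b / (1 - a) + 1)) := by
          field_simp; ring
      _ ≤ (1 - a + b) * (log b - log (1 - a)) := by gcongr
  rw [log_div (by positivity) (by positivity), log_mul hb0.ne' h1a.ne', log_pow]
  simp only [binEntropy, log_inv]
  push_cast
  linarith

theorem two_mul_binEnt_sub_le {a b : ℝ} (ha0 : 0 < a) (ha1 : a < 1) (hb0 : 0 < b) (hb1 : b < 1)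
    (hab : 1 - b ≤ a) :
    2 * (binEnt b - binEnt a) ≤ (a + b - 1) * logb 2 (a ^ 2 / (b * (1 - a))) := by
  rw [binEnt_eq_binEntropy_div_log_two, binEnt_eq_binEntropy_div_log_two, logb, ← sub_div,
    mul_div_assoc', mul_div_assoc']
  exact div_le_div_of_nonneg_right (two_mul_binEntropy_sub_le ha0 ha1 hb0 hb1 hab)
    (log_pos one_lt_two).le

theorem stmt_17_general (a b : ℝ) (ha : a ∈ Set.Ioo (0 : ℝ) 1) (hb : b ∈ Set.Ioo (0 : ℝ) 1)
    (h1 : 1 - b ≤ a) (hne : a + b ≠ 1)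
    (γ : ℝ) (hγ : γ = (2 : ℝ) ^ ((binEnt b - binEnt a) / (a + b - 1))) :
    γ ^ 2 ≤ a ^ 2 / (b * (1 - a)) := by
  obtain ⟨ha0, ha1⟩ := ha
  obtain ⟨hb0, hb1⟩ := hb
  have hs : 0 < a + b - 1 := sub_pos.mpr <| lt_of_le_of_ne (by linarith) hne.symm
  have hR : 0 < a ^ 2 / (b * (1 - a)) := by
    have : 0 < 1 - a := by linarith
    positivity
  rw [hγ, ← rpow_mul_natCast zero_le_two, ← le_logb_iff_rpow_le one_lt_two hR, Nat.cast_ofNat,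
    div_mul_eq_mul_div, div_le_iff₀ hs, mul_comm _ 2, mul_comm _ (a + b - 1)]
  exact two_mul_binEnt_sub_le ha0 ha1 hb0 hb1 h1

/-- For `a, b ∈ (0,1)` with `a ≥ 1-b` (and `a + b ≠ 1`, so that `γ` is well defined),
`a(1-a) ≤ b(1-b)`, and `γ = 2^((H(b)-H(a))/(a+b-1))`, we have `γ² ≤ a²/(b(1-a))`. -/
theorem stmt_17 (a b : ℝ) (ha : a ∈ Set.Ioo (0 : ℝ) 1) (hb : b ∈ Set.Ioo (0 : ℝ) 1)
    (h1 : 1 - b ≤ a) (hne : a + b ≠ 1) (h2 : a * (1 - a) ≤ b * (1 - b))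
    (γ : ℝ) (hγ : γ = (2 : ℝ) ^ ((binEnt b - binEnt a) / (a + b - 1))) :
    γ ^ 2 ≤ a ^ 2 / (b * (1 - a)) :=
  stmt_17_general a b ha hb h1 hne γ hγ
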